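/- Let {U_λ}_{λ>0} be a family of piecewise continuous real-valued functions on [0, ‖A‖²] satisfying: (i) each U_λ is bounded, (ii) 0 ≤ μ U_λ(μ) ≤ 1 for all μ, and (iii) μ U_λ(μ) → 1 as λ → 0⁺ for each μ ∈ (0, ‖A‖²]. Then the family of operators R_λ = U_λ(A*A) A* is a regularization algorithm: each R_λ is bounded, and for every g in the range of A, R_λ g converges to the minimal-norm solution f⁺ as λ → 0⁺. -/

import Mathlib

/-!
In the singular system, `R_λ` is diagonal: it multiplies the coefficient `⟪g, u_j⟫` by
`σ_j U_λ(σ_j²)`, which is at most `‖A‖ · sup |U_λ|` since `σ_j ≤ ‖A‖`, so Bessel's inequality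
bounds `R_λ`. Since `f⁺ ⊥ N(A)` and every vector orthogonal to all `v_j` lies in `N(A)`, we have
`f⁺ = Σ ⟪f⁺, v_j⟫ v_j`, and the coefficients of `R_λ (A f⁺)` are `φ_λ(j) ⟪f⁺, v_j⟫` with
`φ_λ(j) = σ_j² U_λ(σ_j²) ∈ [0, 1]`. Thus `‖R_λ (A f⁺) - f⁺‖² = Σ (φ_λ(j) - 1)² ⟪f⁺, v_j⟫²`, which
tends to `0` by dominated convergence for series, since `φ_λ(j) → 1` for each `j`.
-/

open scoped InnerProductSpace
open Filter Topology

theorem HasSum.inner_eq_zero_of_forall_inner_eq_zero {ι E : Type*} [NormedAddCommGroup E]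
    [InnerProductSpace ℝ E] {v : ι → E} {a : ι → ℝ} {x w : E}
    (h : HasSum (fun j => a j • v j) x) (hw : ∀ j, ⟪v j, w⟫_ℝ = 0) : ⟪x, w⟫_ℝ = 0 := by
  have := h.mapL (innerSLFlip ℝ w)
  simp only [innerSLFlip_apply_apply, real_inner_smul_left, hw, mul_zero] at this
  exact this.unique hasSum_zero

namespace Orthonormal

variable {ι E : Type*} [NormedAddCommGroup E] [InnerProductSpace ℝ E] {v : ι → E}

theorem inner_eq_of_hasSum (hv : Orthonormal ℝ v) {a : ι → ℝ} {x : E}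
    (h : HasSum (fun j => a j • v j) x) (i : ι) : ⟪x, v i⟫_ℝ = a i := by
  have hi : HasSum (fun j => ⟪a j • v j, v i⟫_ℝ) (⟪a i • v i, v i⟫_ℝ) :=
    hasSum_single i fun j hj => by rw [real_inner_smul_left, hv.inner_eq_zero hj, mul_zero]
  have hx : HasSum (fun j => ⟪a j • v j, v i⟫_ℝ) ⟪x, v i⟫_ℝ := h.mapL (innerSLFlip ℝ (v i))
  rw [hx.unique hi, real_inner_smul_left, real_inner_self_eq_norm_sq, hv.norm_eq_one, one_pow,
    mul_one]

theorem hasSum_sq_of_hasSum (hv : Orthonormal ℝ v) {a : ι → ℝ} {x : E}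
    (h : HasSum (fun j => a j • v j) x) : HasSum (fun j => a j ^ 2) (‖x‖ ^ 2) := by
  have := h.mapL (innerSL ℝ x)
  simp only [innerSL_apply_apply, real_inner_smul_right, hv.inner_eq_of_hasSum h] at this
  simpa [real_inner_self_eq_norm_sq, sq] using this

theorem summable_smul_of_summable_sq [CompleteSpace E] (hv : Orthonormal ℝ v) {a : ι → ℝ}
    (ha : Summable fun j => a j ^ 2) : Summable fun j => a j • v j := by
  have := (hv.orthogonalFamily.summable_iff_norm_sq_summable a).mpr (by
    simpa only [Real.norm_eq_abs, sq_abs] using ha)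
  simpa [LinearIsometry.toSpanSingleton, LinearMap.toSpanSingleton] using this

theorem summable_inner_sq (hv : Orthonormal ℝ v) (x : E) :
    Summable fun j => ⟪x, v j⟫_ℝ ^ 2 := by
  simpa only [Real.norm_eq_abs, sq_abs, real_inner_comm x] using hv.inner_products_summable x

theorem tsum_inner_sq_le (hv : Orthonormal ℝ v) (x : E) :
    ∑' j, ⟪x, v j⟫_ℝ ^ 2 ≤ ‖x‖ ^ 2 := by
  simpa only [Real.norm_eq_abs, sq_abs, real_inner_comm x] using hv.tsum_inner_products_le x

theorem hasSum_inner_smul_of_inner_eq_zero [CompleteSpace E] (hv : Orthonormal ℝ v) {f : E}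
    (hf : ∀ w, (∀ j, ⟪w, v j⟫_ℝ = 0) → ⟪f, w⟫_ℝ = 0) :
    HasSum (fun j => ⟪f, v j⟫_ℝ • v j) f := by
  obtain ⟨x, hx⟩ := hv.summable_smul_of_summable_sq (hv.summable_inner_sq f)
  have hperp : ∀ j, ⟪f - x, v j⟫_ℝ = 0 := fun j => by
    rw [inner_sub_left, hv.inner_eq_of_hasSum hx, sub_self]
  have hxw : ⟪x, f - x⟫_ℝ = 0 :=
    hx.inner_eq_zero_of_forall_inner_eq_zero fun j => by rw [real_inner_comm, hperp]
  have hfx : ⟪f - x, f - x⟫_ℝ = 0 := by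
    rw [inner_sub_left, hf _ hperp, hxw, sub_zero]
  convert hx
  exact sub_eq_zero.mp (inner_self_eq_zero.mp hfx)

theorem exists_hasSum_mul_inner_smul_norm_le [CompleteSpace E] {F : Type*}
    [NormedAddCommGroup F] [InnerProductSpace ℝ F] (hv : Orthonormal ℝ v) {u : ι → F}
    (hu : Orthonormal ℝ u) {m : ι → ℝ} {C : ℝ} (hC : 0 ≤ C) (hm : ∀ j, |m j| ≤ C) (g : F) :
    ∃ x, HasSum (fun j => (m j * ⟪g, u j⟫_ℝ) • v j) x ∧ ‖x‖ ≤ C * ‖g‖ := by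
  have hle : ∀ j, (m j * ⟪g, u j⟫_ℝ) ^ 2 ≤ C ^ 2 * ⟪g, u j⟫_ℝ ^ 2 := fun j => by
    rw [mul_pow]
    exact mul_le_mul_of_nonneg_right
      (sq_le_sq' (abs_le.mp (hm j)).1 (abs_le.mp (hm j)).2) (sq_nonneg _)
  have hsq : Summable fun j => (m j * ⟪g, u j⟫_ℝ) ^ 2 :=
    .of_nonneg_of_le (fun j => sq_nonneg _) hle ((hu.summable_inner_sq g).mul_left _)
  obtain ⟨x, hx⟩ := hv.summable_smul_of_summable_sq hsq
  refine ⟨x, hx, (sq_le_sq₀ (norm_nonneg x) (by positivity)).mp ?_⟩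
  calc ‖x‖ ^ 2 = ∑' j, (m j * ⟪g, u j⟫_ℝ) ^ 2 := (hv.hasSum_sq_of_hasSum hx).tsum_eq.symm
    _ ≤ ∑' j, C ^ 2 * ⟪g, u j⟫_ℝ ^ 2 :=
      hsq.tsum_le_tsum hle ((hu.summable_inner_sq g).mul_left _)
    _ = C ^ 2 * ∑' j, ⟪g, u j⟫_ℝ ^ 2 := tsum_mul_left
    _ ≤ C ^ 2 * ‖g‖ ^ 2 := by gcongr; exact hu.tsum_inner_sq_le g
    _ = (C * ‖g‖) ^ 2 := (mul_pow _ _ _).symm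

theorem tendsto_of_hasSum_mul_smul {α : Type*} {l : Filter α} (hv : Orthonormal ℝ v)
    {c : ι → ℝ} {f : E} (hf : HasSum (fun j => c j • v j) f) {φ : α → ι → ℝ} {r : α → E}
    (hr : ∀ᶠ t in l, HasSum (fun j => (φ t j * c j) • v j) (r t)) {B : ℝ}
    (hφB : ∀ᶠ t in l, ∀ j, |φ t j| ≤ B) (hφ : ∀ j, Tendsto (φ · j) l (𝓝 1)) :
    Tendsto r l (𝓝 f) := by
  have hdist : ∀ᶠ t in l, HasSum (fun j => ((φ t j - 1) * c j) ^ 2) (‖r t - f‖ ^ 2) := by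
    filter_upwards [hr] with t ht
    refine hv.hasSum_sq_of_hasSum ?_
    simpa only [sub_mul, one_mul, sub_smul] using ht.sub hf
  have hbound : ∀ᶠ t in l, ∀ j, ‖((φ t j - 1) * c j) ^ 2‖ ≤ (B + 1) ^ 2 * c j ^ 2 := by
    filter_upwards [hφB] with t ht j
    rw [Real.norm_eq_abs, abs_of_nonneg (sq_nonneg _), mul_pow]
    refine mul_le_mul_of_nonneg_right (sq_le_sq' ?_ ?_) (sq_nonneg _) <;>
      linarith [abs_le.mp (ht j)]
  have hlim : ∀ j, Tendsto (fun t => ((φ t j - 1) * c j) ^ 2) l (𝓝 0) := fun j => by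
    simpa using (((hφ j).sub_const 1).mul_const (c j)).pow 2
  have hsq : Tendsto (fun t => ‖r t - f‖ ^ 2) l (𝓝 0) := by
    have := tendsto_tsum_of_dominated_convergence
      ((hv.hasSum_sq_of_hasSum hf).summable.mul_left ((B + 1) ^ 2)) hlim hbound
    rw [tsum_zero] at this
    exact this.congr' (hdist.mono fun t ht => ht.tsum_eq)
  rw [tendsto_iff_norm_sub_tendsto_zero]
  simpa using hsq.sqrt

end Orthonormal

theorem singularValue_le_opNorm {ι X Y : Type*} [NormedAddCommGroup X] [InnerProductSpace ℝ X]
    [NormedAddCommGroup Y] [InnerProductSpace ℝ Y] (A : X →L[ℝ] Y) {σ : ι → ℝ} {v : ι → X}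
    {u : ι → Y} (hv : Orthonormal ℝ v) (hu : Orthonormal ℝ u)
    (hA : ∀ f : X, HasSum (fun j => (σ j * ⟪f, v j⟫_ℝ) • u j) (A f)) (j : ι) :
    σ j ≤ ‖A‖ :=
  calc σ j = ⟪A (v j), u j⟫_ℝ := by
        rw [hu.inner_eq_of_hasSum (hA (v j)), real_inner_self_eq_norm_sq, hv.norm_eq_one,
          one_pow, mul_one]
    _ ≤ ‖A (v j)‖ * ‖u j‖ := real_inner_le_norm _ _
    _ ≤ ‖A‖ * ‖v j‖ := by rw [hu.norm_eq_one, mul_one]; exact A.le_opNorm _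
    _ = ‖A‖ := by rw [hv.norm_eq_one, mul_one]

theorem spectral_window_regularization_general
    {X Y : Type*} [NormedAddCommGroup X] [InnerProductSpace ℝ X] [CompleteSpace X]
    [NormedAddCommGroup Y] [InnerProductSpace ℝ Y] [CompleteSpace Y]
    (A : X →L[ℝ] Y)
    (σ : ℕ → ℝ) (v : ℕ → X) (u : ℕ → Y)
    (hσ : ∀ j, 0 < σ j) (hv : Orthonormal ℝ v) (hu : Orthonormal ℝ u)
    (hA : ∀ f : X, HasSum (fun j => (σ j * ⟪f, v j⟫_ℝ) • u j) (A f))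
    (U : ℝ → ℝ → ℝ)
    (hbound : ∀ lam : ℝ, 0 < lam → ∃ c : ℝ, ∀ μ ∈ Set.Icc (0:ℝ) (‖A‖ ^ 2), |U lam μ| ≤ c)
    (hwindow : ∀ lam : ℝ, 0 < lam → ∀ μ ∈ Set.Icc (0:ℝ) (‖A‖ ^ 2),
      0 ≤ μ * U lam μ ∧ μ * U lam μ ≤ 1)
    (hconv : ∀ μ ∈ Set.Ioc (0:ℝ) (‖A‖ ^ 2),
      Tendsto (fun lam : ℝ => μ * U lam μ) (nhdsWithin 0 (Set.Ioi 0)) (nhds 1)) :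
    (∀ lam : ℝ, 0 < lam → ∃ C : ℝ, ∀ g : Y, ∃ x : X,
      HasSum (fun j => (σ j * U lam (σ j ^ 2) * ⟪g, u j⟫_ℝ) • v j) x ∧ ‖x‖ ≤ C * ‖g‖) ∧
    (∀ fplus : X, (∀ z : X, A z = 0 → ⟪fplus, z⟫_ℝ = 0) →
      ∀ r : ℝ → X,
      (∀ lam : ℝ, 0 < lam →
        HasSum (fun j => (σ j * U lam (σ j ^ 2) * ⟪A fplus, u j⟫_ℝ) • v j) (r lam)) →
      Tendsto r (nhdsWithin 0 (Set.Ioi 0)) (nhds fplus)) := by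
  have hσA := singularValue_le_opNorm A hv hu hA
  have hσsq : ∀ j, σ j ^ 2 ∈ Set.Icc (0:ℝ) (‖A‖ ^ 2) :=
    fun j => ⟨sq_nonneg _, pow_le_pow_left₀ (hσ j).le (hσA j) 2⟩
  refine ⟨fun lam hlam => ?_, fun fplus hperp r hr => ?_⟩
  · obtain ⟨c, hc⟩ := hbound lam hlam
    have hc0 : 0 ≤ c := (abs_nonneg _).trans (hc 0 ⟨le_rfl, sq_nonneg _⟩)
    refine ⟨‖A‖ * c, hv.exists_hasSum_mul_inner_smul_norm_le hu (by positivity) fun j => ?_⟩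
    rw [abs_mul, abs_of_pos (hσ j)]
    exact mul_le_mul (hσA j) (hc _ (hσsq j)) (abs_nonneg _) (norm_nonneg _)
  · have hf : HasSum (fun j => ⟪fplus, v j⟫_ℝ • v j) fplus :=
      hv.hasSum_inner_smul_of_inner_eq_zero fun w hw =>
        hperp w ((hA w).unique (by simpa only [hw, mul_zero, zero_smul] using hasSum_zero))
    refine hv.tendsto_of_hasSum_mul_smul hf (φ := fun lam j => σ j ^ 2 * U lam (σ j ^ 2))
      (B := 1) ?_ ?_ fun j => hconv _ ⟨pow_pos (hσ j) 2, (hσsq j).2⟩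
    · filter_upwards [self_mem_nhdsWithin] with lam hlam
      convert hr lam hlam using 3 with j
      rw [hu.inner_eq_of_hasSum (hA fplus)]
      ring
    · filter_upwards [self_mem_nhdsWithin] with lam hlam j
      have hw := hwindow lam hlam _ (hσsq j)
      exact abs_le.mpr ⟨by linarith [hw.1], hw.2⟩

/-- Spectral windows give regularization algorithms: if `0 ≤ μ U_λ(μ) ≤ 1` on
`[0,‖A‖²]`, each `U_λ` is bounded there, and `μ U_λ(μ) → 1` as `λ → 0⁺` for
`μ ∈ (0,‖A‖²]`, then `R_λ = U_λ(A*A) A*` (expressed via the singular system as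
`R_λ g = Σ_j σ_j U_λ(σ_j²) ⟪g,u_j⟫ v_j`) is bounded for each `λ > 0`, and for every
`g = A f⁺` in the range of `A` with `f⁺ ⊥ N(A)` (the minimal-norm solution),
`R_λ g → f⁺` as `λ → 0⁺`. -/
theorem spectral_window_regularization
    {X Y : Type*} [NormedAddCommGroup X] [InnerProductSpace ℝ X] [CompleteSpace X]
    [NormedAddCommGroup Y] [InnerProductSpace ℝ Y] [CompleteSpace Y]
    (A : X →L[ℝ] Y) (hcomp : IsCompactOperator (A : X → Y))
    (σ : ℕ → ℝ) (v : ℕ → X) (u : ℕ → Y)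
    (hσ : ∀ j, 0 < σ j) (hv : Orthonormal ℝ v) (hu : Orthonormal ℝ u)
    (hA : ∀ f : X, HasSum (fun j => (σ j * ⟪f, v j⟫_ℝ) • u j) (A f))
    (U : ℝ → ℝ → ℝ)
    (hbound : ∀ lam : ℝ, 0 < lam → ∃ c : ℝ, ∀ μ ∈ Set.Icc (0:ℝ) (‖A‖ ^ 2), |U lam μ| ≤ c)
    (hwindow : ∀ lam : ℝ, 0 < lam → ∀ μ ∈ Set.Icc (0:ℝ) (‖A‖ ^ 2),
      0 ≤ μ * U lam μ ∧ μ * U lam μ ≤ 1)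
    (hconv : ∀ μ ∈ Set.Ioc (0:ℝ) (‖A‖ ^ 2),
      Tendsto (fun lam : ℝ => μ * U lam μ) (nhdsWithin 0 (Set.Ioi 0)) (nhds 1)) :
    (∀ lam : ℝ, 0 < lam → ∃ C : ℝ, ∀ g : Y, ∃ x : X,
      HasSum (fun j => (σ j * U lam (σ j ^ 2) * ⟪g, u j⟫_ℝ) • v j) x ∧ ‖x‖ ≤ C * ‖g‖) ∧
    (∀ fplus : X, (∀ z : X, A z = 0 → ⟪fplus, z⟫_ℝ = 0) →
      ∀ r : ℝ → X,
      (∀ lam : ℝ, 0 < lam →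
        HasSum (fun j => (σ j * U lam (σ j ^ 2) * ⟪A fplus, u j⟫_ℝ) • v j) (r lam)) →
      Tendsto r (nhdsWithin 0 (Set.Ioi 0)) (nhds fplus)) :=
  spectral_window_regularization_general A σ v u hσ hv hu hA U hbound hwindow hconv
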